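/- Let n ≥ 1 be an integer and α ∈ (0,n). Then there exists a constant C > 0, depending only on n and α, such that for every x ∈ ℝⁿ with x ≠ 0 one has G_α(x) ≤ C · |x|^{α−n} · exp(−|x|/2); moreover G_α is differentiable on ℝⁿ \ {0} and its derivative satisfies ‖DG_α(x)‖ ≤ C · |x|^{α−n−1} · exp(−|x|/2) for every x ≠ 0. -/

import Mathlib

/-!
With `s = (α - n) / 2 - 1 < -1`, `G_α(x) = P_s(|x|²)` for the profile
`P_s(t) = ∫₀^∞ exp(-π t / u - u / (4π)) u^s du`. Differentiation under the integral gives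
`P_s' = -π P_{s-1}`, so it suffices to bound the profiles `P_s(r²)` for `s < -1`.
AM-GM, `π r² / (2u) + u / (4π) ≥ r / 2`, splits off the factor `exp(-r/2)`, and the remaining
integral `∫₀^∞ exp(-π r² / (2u)) u^s du` equals `r^(2s+2)` times its value at `r = 1` by the
substitution `u ↦ r² u`; it is finite since `u ↦ 1/u` turns it into a Gamma integral.
-/

open MeasureTheory Metric Set
open scoped ENNReal NNReal

/-- The (unnormalized) Bessel kernel `G_α` on `ℝⁿ`, with values in `[0,∞]`. -/
noncomputable def besselKernel (n : ℕ) (α : ℝ) (x : EuclideanSpace ℝ (Fin n)) : ℝ≥0∞ :=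
  ∫⁻ u in Set.Ioi (0 : ℝ),
    ENNReal.ofReal (Real.exp (-(Real.pi * ‖x‖ ^ 2 / u) - u / (4 * Real.pi)) *
      u ^ ((α - n) / 2 - 1))

open Real

theorem integrableOn_exp_neg_div_mul_rpow {c t : ℝ} (hc : 0 < c) (ht : t < -1) :
    IntegrableOn (fun u => exp (-(c / u)) * u ^ t) (Ioi 0) := by
  have hΓ := GammaIntegral_convergent (s := -t - 1) (by linarith)
  rw [sub_sub, one_add_one_eq_two, ← mul_zero c,
    ← integrableOn_Ioi_comp_mul_left_iff (fun v => exp (-v) * v ^ (-t - 2)) 0 hc] at hΓ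
  rw [← integrableOn_Ioi_comp_rpow_iff' _ (neg_ne_zero.2 one_ne_zero)]
  refine IntegrableOn.congr_fun (hΓ.const_mul (c ^ (t + 2))) (fun x (hx : 0 < x) => ?_)
    measurableSet_Ioi
  have hc' : c ^ (t + 2) * c ^ (-t - 2) = 1 := by
    rw [← rpow_add hc, show t + 2 + (-t - 2) = 0 by ring, rpow_zero]
  have hx' : x ^ (-t - 2) = x ^ (-1 - 1 : ℝ) * x ^ (-t) := by
    rw [← rpow_add hx]; ring_nf
  simp only [smul_eq_mul, rpow_neg_one, div_inv_eq_mul, inv_rpow hx.le, ← rpow_neg hx.le,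
    mul_rpow hc.le hx.le, hx']
  linear_combination (exp (-(c * x)) * x ^ (-1 - 1 : ℝ) * x ^ (-t)) * hc'

theorem integral_exp_neg_mul_div_mul_rpow {a c t : ℝ} (ha : 0 < a) :
    ∫ u in Ioi 0, exp (-(a * c / u)) * u ^ t
      = a ^ (t + 1) * ∫ u in Ioi 0, exp (-(c / u)) * u ^ t := by
  have h := integral_comp_mul_left_Ioi' (fun u => exp (-(a * c / u)) * u ^ t) 0 ha
  rw [mul_zero] at h
  rw [← h, smul_eq_mul, rpow_add_one ha.ne', mul_comm (a ^ t), mul_assoc,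
    ← integral_const_mul (a ^ t)]
  congr 1
  refine setIntegral_congr_fun measurableSet_Ioi fun (x : ℝ) (hx : 0 < x) => ?_
  rw [mul_div_mul_left _ _ ha.ne', mul_rpow ha.le hx.le]
  ring

/-- Unfolding `besselKernel n α x` gives the lower integral of
`besselIntegrand ((α - n) / 2 - 1) (‖x‖ ^ 2)` over `Ioi 0`, a function of `‖x‖ ^ 2`. -/
noncomputable def besselIntegrand (s t u : ℝ) : ℝ := exp (-(π * t / u) - u / (4 * π)) * u ^ s

noncomputable def besselProfile (s t : ℝ) : ℝ := ∫ u in Ioi 0, besselIntegrand s t u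

namespace besselIntegrand

variable {s t u : ℝ}

theorem nonneg (hu : 0 ≤ u) : 0 ≤ besselIntegrand s t u := by
  unfold besselIntegrand; positivity

theorem continuousOn : ContinuousOn (besselIntegrand s t) (Ioi 0) := by
  unfold besselIntegrand
  fun_prop (disch := intro u (hu : 0 < u); positivity)

theorem aestronglyMeasurable :
    AEStronglyMeasurable (besselIntegrand s t) (volume.restrict (Ioi 0)) :=
  continuousOn.aestronglyMeasurable measurableSet_Ioi

theorem ae_nonneg : 0 ≤ᵐ[volume.restrict (Ioi 0)] besselIntegrand s t :=
  (ae_restrict_iff' measurableSet_Ioi).2 (.of_forall fun _ hu => nonneg (le_of_lt hu))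

theorem antitone (hu : 0 < u) : Antitone (besselIntegrand s · u) := fun _ _ h => by
  dsimp only [besselIntegrand]
  gcongr

theorem le_exp_neg_div_mul_rpow (hu : 0 < u) :
    besselIntegrand s t u ≤ exp (-(π * t / u)) * u ^ s := by
  unfold besselIntegrand
  gcongr
  linarith [show 0 ≤ u / (4 * π) by positivity]

/-- AM-GM: `π r² / (2u) + u / (4π) ≥ r / 2`. -/
theorem sq_le_exp_mul (r : ℝ) (hu : 0 < u) :
    besselIntegrand s (r ^ 2) u ≤ exp (-(r / 2)) * (exp (-(r ^ 2 * (π / 2) / u)) * u ^ s) := by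
  rw [besselIntegrand, ← mul_assoc, ← exp_add]
  gcongr
  have : r / 2 ≤ π / 2 * r ^ 2 / u + u / (4 * π) := by
    rw [div_add_div _ _ hu.ne' (by positivity), le_div_iff₀ (by positivity)]
    nlinarith [sq_nonneg (π * r - u), sq_nonneg (π * r)]
  linarith [show π * r ^ 2 / u = π / 2 * r ^ 2 / u + r ^ 2 * (π / 2) / u by ring]

theorem integrableOn (ht : 0 < t) (hs : s < -1) : IntegrableOn (besselIntegrand s t) (Ioi 0) :=
  (integrableOn_exp_neg_div_mul_rpow (by positivity) hs).mono' aestronglyMeasurable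
    ((ae_restrict_iff' measurableSet_Ioi).2 (.of_forall fun _ hu =>
      (norm_of_nonneg (nonneg (le_of_lt hu))).trans_le (le_exp_neg_div_mul_rpow hu)))

theorem hasDerivAt (hu : 0 < u) :
    HasDerivAt (besselIntegrand s · u) (-π * besselIntegrand (s - 1) t u) t := by
  have h : HasDerivAt (fun t => -(π * t / u) - u / (4 * π)) (-(π / u)) t := by
    simpa using (((hasDerivAt_id t).const_mul π).div_const u).neg.sub_const (u / (4 * π))
  refine (h.exp.mul_const (u ^ s)).congr_deriv ?_
  rw [besselIntegrand, rpow_sub_one hu.ne']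
  field_simp

end besselIntegrand

section besselProfile

variable {s t r : ℝ}

theorem hasDerivAt_besselProfile (ht : 0 < t) (hs : s < -1) :
    HasDerivAt (besselProfile s) (-π * besselProfile (s - 1) t) t := by
  have hbound : ∀ᵐ u ∂volume.restrict (Ioi 0), ∀ t' ∈ ball t (t / 2),
      ‖-π * besselIntegrand (s - 1) t' u‖ ≤ π * besselIntegrand (s - 1) (t / 2) u := by
    refine (ae_restrict_iff' measurableSet_Ioi).2 (.of_forall fun u (hu : 0 < u) t' ht' => ?_)
    have ht't : t / 2 ≤ t' := by
      linarith [(abs_lt.1 (mem_ball_iff_norm.1 ht')).1]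
    rw [norm_mul, norm_neg, norm_of_nonneg pi_pos.le,
      norm_of_nonneg (besselIntegrand.nonneg hu.le)]
    exact mul_le_mul_of_nonneg_left (besselIntegrand.antitone hu ht't) pi_pos.le
  have h := hasDerivAt_integral_of_dominated_loc_of_deriv_le (ball_mem_nhds t (half_pos ht))
    (F := fun t u => besselIntegrand s t u) (F' := fun t u => -π * besselIntegrand (s - 1) t u)
    (.of_forall fun _ => besselIntegrand.aestronglyMeasurable)
    (besselIntegrand.integrableOn ht hs)
    (besselIntegrand.aestronglyMeasurable.const_mul _) hbound
    ((besselIntegrand.integrableOn (half_pos ht) (by linarith)).const_mul π)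
    ((ae_restrict_iff' measurableSet_Ioi).2
      (.of_forall fun _ hu _ _ => besselIntegrand.hasDerivAt hu))
  exact h.2.congr_deriv (integral_const_mul _ _)

theorem besselProfile_sq_le (hr : 0 < r) (hs : s < -1) :
    besselProfile s (r ^ 2) ≤
      (∫ u in Ioi 0, exp (-(π / 2 / u)) * u ^ s) * r ^ (2 * (s + 1)) * exp (-(r / 2)) := by
  have hdom : IntegrableOn (fun u => exp (-(r / 2)) * (exp (-(r ^ 2 * (π / 2) / u)) * u ^ s))
      (Ioi 0) :=
    (integrableOn_exp_neg_div_mul_rpow (by positivity) hs).const_mul _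
  calc besselProfile s (r ^ 2)
      ≤ ∫ u in Ioi 0, exp (-(r / 2)) * (exp (-(r ^ 2 * (π / 2) / u)) * u ^ s) :=
        setIntegral_mono_on (besselIntegrand.integrableOn (by positivity) hs) hdom
          measurableSet_Ioi fun _ hu => besselIntegrand.sq_le_exp_mul r hu
    _ = exp (-(r / 2)) * ((r ^ 2) ^ (s + 1) * ∫ u in Ioi 0, exp (-(π / 2 / u)) * u ^ s) := by
        rw [integral_const_mul, integral_exp_neg_mul_div_mul_rpow (by positivity)]
    _ = _ := by
        rw [← rpow_natCast, ← rpow_mul hr.le]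
        push_cast
        ring

end besselProfile

section besselKernel

variable {n : ℕ} {α : ℝ} {x : EuclideanSpace ℝ (Fin n)}

theorem besselKernel_toReal :
    (besselKernel n α x).toReal = besselProfile ((α - n) / 2 - 1) (‖x‖ ^ 2) :=
  (integral_eq_lintegral_of_nonneg_ae besselIntegrand.ae_nonneg
    besselIntegrand.aestronglyMeasurable).symm

theorem besselKernel_eq_ofReal (hα : α < n) (hx : x ≠ 0) :
    besselKernel n α x = ENNReal.ofReal (besselProfile ((α - n) / 2 - 1) (‖x‖ ^ 2)) :=
  (ofReal_integral_eq_lintegral_ofReal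
    (besselIntegrand.integrableOn (by positivity) (by linarith)) besselIntegrand.ae_nonneg).symm

theorem besselKernel_le (hα : α < n) (hx : x ≠ 0) :
    besselKernel n α x ≤ ENNReal.ofReal
      ((∫ u in Ioi 0, exp (-(π / 2 / u)) * u ^ ((α - n) / 2 - 1)) *
        ‖x‖ ^ (α - n) * exp (-‖x‖ / 2)) := by
  rw [besselKernel_eq_ofReal hα hx]
  refine ENNReal.ofReal_le_ofReal
    ((besselProfile_sq_le (norm_pos_iff.2 hx) (by linarith)).trans_eq ?_)
  rw [show 2 * ((α - n) / 2 - 1 + 1) = α - n by ring, neg_div]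

theorem hasFDerivAt_besselKernel_toReal (hα : α < n) (hx : x ≠ 0) :
    HasFDerivAt (fun y => (besselKernel n α y).toReal)
      ((-π * besselProfile ((α - n) / 2 - 1 - 1) (‖x‖ ^ 2)) • (2 • innerSL ℝ x)) x := by
  simp only [besselKernel_toReal]
  exact (hasDerivAt_besselProfile (by positivity) (by linarith)).comp_hasFDerivAt x
    (hasStrictFDerivAt_norm_sq x).hasFDerivAt

theorem norm_fderiv_besselKernel_toReal_le (hα : α < n) (hx : x ≠ 0) :
    ‖fderiv ℝ (fun y => (besselKernel n α y).toReal) x‖ ≤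
      2 * π * (∫ u in Ioi 0, exp (-(π / 2 / u)) * u ^ ((α - n) / 2 - 1 - 1)) *
        ‖x‖ ^ (α - n - 1) * exp (-‖x‖ / 2) := by
  have hr : 0 < ‖x‖ := norm_pos_iff.2 hx
  have hP := besselProfile_sq_le (s := (α - n) / 2 - 1 - 1) hr (by linarith)
  have hP₀ : 0 ≤ besselProfile ((α - n) / 2 - 1 - 1) (‖x‖ ^ 2) :=
    setIntegral_nonneg measurableSet_Ioi fun _ hu => besselIntegrand.nonneg (le_of_lt hu)
  have hD : ‖(2 • innerSL ℝ x : EuclideanSpace ℝ (Fin n) →L[ℝ] ℝ)‖ ≤ 2 * ‖x‖ :=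
    norm_nsmul_le.trans_eq (by rw [innerSL_apply_norm]; norm_num)
  rw [(hasFDerivAt_besselKernel_toReal hα hx).fderiv, norm_smul, norm_mul, norm_neg,
    norm_of_nonneg pi_pos.le, norm_of_nonneg hP₀]
  calc π * besselProfile ((α - n) / 2 - 1 - 1) (‖x‖ ^ 2) * ‖2 • innerSL ℝ x‖
      ≤ π * ((∫ u in Ioi 0, exp (-(π / 2 / u)) * u ^ ((α - n) / 2 - 1 - 1)) *
          ‖x‖ ^ (2 * ((α - n) / 2 - 1 - 1 + 1)) * exp (-(‖x‖ / 2))) * (2 * ‖x‖) := by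
        gcongr
        exact mul_nonneg pi_pos.le (hP₀.trans hP)
    _ = _ := by
        rw [show 2 * ((α - n) / 2 - 1 - 1 + 1) = α - n - 1 - 1 by ring, rpow_sub_one hr.ne',
          neg_div]
        field_simp

end besselKernel

theorem statement7 (n : ℕ) (α : ℝ) (hα' : α < n) :
    ∃ C : ℝ, 0 < C ∧
      ∀ x : EuclideanSpace ℝ (Fin n), x ≠ 0 →
        besselKernel n α x ≤ ENNReal.ofReal (C * ‖x‖ ^ (α - n) * Real.exp (-‖x‖ / 2)) ∧
        DifferentiableAt ℝ (fun y => (besselKernel n α y).toReal) x ∧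
        ‖fderiv ℝ (fun y => (besselKernel n α y).toReal) x‖ ≤
          C * ‖x‖ ^ (α - n - 1) * Real.exp (-‖x‖ / 2) := by
  set I : ℝ → ℝ := fun t => ∫ u in Ioi 0, exp (-(π / 2 / u)) * u ^ t
  have hI : ∀ t, 0 ≤ I t := fun t =>
    setIntegral_nonneg measurableSet_Ioi fun u (hu : 0 < u) => by positivity
  have hI₁ := mul_nonneg two_pi_pos.le (hI ((α - n) / 2 - 1 - 1))
  refine ⟨I ((α - n) / 2 - 1) + 2 * π * I ((α - n) / 2 - 1 - 1) + 1,
    by linarith [hI ((α - n) / 2 - 1)], fun x hx => ⟨?_, ?_, ?_⟩⟩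
  · refine (besselKernel_le hα' hx).trans (ENNReal.ofReal_le_ofReal ?_)
    gcongr
    linarith
  · exact (hasFDerivAt_besselKernel_toReal hα' hx).differentiableAt
  · refine (norm_fderiv_besselKernel_toReal_le hα' hx).trans ?_
    gcongr
    linarith [hI ((α - n) / 2 - 1)]
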